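/- Let σ > 0, n ≥ 1, and let x, w ∈ ℝⁿ with x ≠ 0. Then ∫_{ℝⁿ} sign(⟨t, x⟩) · k_σ(w − t) dt = erf( ⟨w, x⟩ / (√2 σ ‖x‖) ), where ⟨·,·⟩ denotes the Euclidean inner product and sign(y) = 1 for y > 0, sign(y) = −1 for y < 0, and sign(0) = 0. -/

import Mathlib

open MeasureTheory
open scoped RealInnerProductSpace

/-- Isotropic Gaussian kernel on `ℝⁿ`: `k_σ(x) = (√(2π) σ)^{-n} exp(−‖x‖²/(2σ²))`. -/
noncomputable def gaussKernel (σ : ℝ) {n : ℕ} (x : EuclideanSpace ℝ (Fin n)) : ℝ :=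
  ((Real.sqrt (2 * Real.pi) * σ)⁻¹) ^ n * Real.exp (-‖x‖ ^ 2 / (2 * σ ^ 2))

/-- The error function `erf(x) = (2/√π) ∫₀ˣ e^{−t²} dt`. -/
noncomputable def erf (x : ℝ) : ℝ :=
  (2 / Real.sqrt Real.pi) * ∫ t in (0 : ℝ)..x, Real.exp (-t ^ 2)

/-!
Translating by `w` and writing `x = ‖x‖ • u` with `‖u‖ = 1`, the integral becomes
`∫ sign (⟪w, u⟫ - ⟪s, u⟫) k_σ(s) ds`. A reflection exchanging `u` with a coordinate vector
preserves both `k_σ` and Lebesgue measure, and `k_σ` is a product of one-dimensional Gaussian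
densities `g_σ`, so this equals `∫ sign (c - a) g_σ(a) da` with `c = ⟪w, u⟫`. As `g_σ` is even,
that is `∫_{-c}^{c} g_σ`, and the substitution `a = √2 σ t` turns it into `erf (c / (√2 σ))`.
-/

open Set

noncomputable def gaussDensity (σ a : ℝ) : ℝ :=
  (Real.sqrt (2 * Real.pi) * σ)⁻¹ * Real.exp (-a ^ 2 / (2 * σ ^ 2))

lemma Real.sign_mul_of_pos {r : ℝ} (hr : 0 < r) (b : ℝ) : Real.sign (r * b) = Real.sign b := by
  rcases lt_trichotomy b 0 with hb | rfl | hb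
  · rw [Real.sign_of_neg hb, Real.sign_of_neg (mul_neg_of_pos_of_neg hr hb)]
  · rw [mul_zero]
  · rw [Real.sign_of_pos hb, Real.sign_of_pos (mul_pos hr hb)]

lemma Real.sign_sub_mul_eq_indicator_sub_indicator (g : ℝ → ℝ) (c a : ℝ) :
    Real.sign (c - a) * g a = (Iio c).indicator g a - (Ioi c).indicator g a := by
  rcases lt_trichotomy a c with h | rfl | h
  · simp [Real.sign_of_pos (sub_pos.2 h), h, h.not_gt]
  · simp
  · simp [Real.sign_of_neg (sub_neg.2 h), h, h.not_gt]

lemma integral_sign_sub_mul_of_even {g : ℝ → ℝ} (hg : Integrable g) (heven : ∀ a, g (-a) = g a)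
    (c : ℝ) : ∫ a, Real.sign (c - a) * g a = ∫ a in -c..c, g a := by
  have hIoi : ∫ a in Ioi c, g a = ∫ a in Iic (-c), g a := by
    rw [← neg_neg c, ← integral_comp_neg_Iic, neg_neg]
    simp only [heven]
  simp only [Real.sign_sub_mul_eq_indicator_sub_indicator g c]
  rw [integral_sub (hg.indicator measurableSet_Iio) (hg.indicator measurableSet_Ioi),
    integral_indicator measurableSet_Iio, integral_indicator measurableSet_Ioi, hIoi,
    ← integral_Iic_eq_integral_Iio, intervalIntegral.integral_Iic_sub_Iic hg.integrableOn
    hg.integrableOn]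

lemma gaussDensity_neg (σ a : ℝ) : gaussDensity σ (-a) = gaussDensity σ a := by
  simp [gaussDensity]

lemma gaussDensity_eq_mul_exp_neg_mul_sq (σ a : ℝ) :
    gaussDensity σ a = (Real.sqrt (2 * Real.pi) * σ)⁻¹ * Real.exp (-(2 * σ ^ 2)⁻¹ * a ^ 2) := by
  rw [gaussDensity, neg_mul, neg_div, div_eq_inv_mul]

lemma integrable_gaussDensity {σ : ℝ} (hσ : σ ≠ 0) : Integrable (gaussDensity σ) := by
  rw [funext (gaussDensity_eq_mul_exp_neg_mul_sq σ)]
  exact (integrable_exp_neg_mul_sq (by positivity)).const_mul _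

lemma integral_gaussDensity {σ : ℝ} (hσ : 0 < σ) : ∫ a, gaussDensity σ a = 1 := by
  simp only [gaussDensity_eq_mul_exp_neg_mul_sq]
  rw [integral_const_mul, integral_gaussian, div_inv_eq_mul,
    show Real.pi * (2 * σ ^ 2) = (Real.sqrt (2 * Real.pi) * σ) ^ 2 by
      rw [mul_pow, Real.sq_sqrt (by positivity)]; ring,
    Real.sqrt_sq (by positivity), inv_mul_cancel₀ (by positivity)]

lemma intervalIntegral_gaussDensity_eq_erf {σ : ℝ} (hσ : σ ≠ 0) (c : ℝ) :
    ∫ a in -c..c, gaussDensity σ a = erf (c / (Real.sqrt 2 * σ)) := by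
  set k := Real.sqrt 2 * σ with hk_def
  have hk : k ≠ 0 := by positivity
  have hsymm : ∫ a in -c..c, gaussDensity σ a = 2 * ∫ a in 0..c, gaussDensity σ a := by
    rw [← intervalIntegral.integral_add_adjacent_intervals (b := 0), ← neg_zero,
      ← intervalIntegral.integral_comp_neg, neg_zero]
    · simp only [gaussDensity_neg]
      ring
    all_goals exact (integrable_gaussDensity hσ).intervalIntegrable
  have hsubst : ∫ a in 0..c, Real.exp (-a ^ 2 / (2 * σ ^ 2))
      = k * ∫ t in 0..c / k, Real.exp (-t ^ 2) := by
    have h := intervalIntegral.integral_comp_mul_left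
      (fun a => Real.exp (-a ^ 2 / (2 * σ ^ 2))) (a := 0) (b := c / k) hk
    have hk_scale : ∀ t, Real.exp (-(k * t) ^ 2 / (2 * σ ^ 2)) = Real.exp (-t ^ 2) := by
      intro t
      rw [mul_pow, mul_pow, Real.sq_sqrt zero_le_two]
      field_simp
    simp only [mul_zero, mul_div_cancel₀ _ hk, hk_scale] at h
    rw [h, smul_eq_mul, mul_inv_cancel_left₀ hk]
  rw [hsymm, erf]
  simp only [gaussDensity]
  rw [intervalIntegral.integral_const_mul, hsubst,
    Real.sqrt_mul zero_le_two, hk_def]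
  field_simp

lemma gaussKernel_toLp (σ : ℝ) {n : ℕ} (z : Fin n → ℝ) :
    gaussKernel σ (WithLp.toLp 2 z) = ∏ i, gaussDensity σ (z i) := by
  simp only [gaussKernel, gaussDensity, EuclideanSpace.real_norm_sq_eq, Finset.prod_mul_distrib,
    Finset.prod_const, Finset.card_univ, Fintype.card_fin, ← Real.exp_sum, Finset.sum_div,
    ← Finset.sum_neg_distrib, neg_div]

lemma gaussKernel_linearIsometryEquiv_apply (σ : ℝ) {n : ℕ}
    (e : EuclideanSpace ℝ (Fin n) ≃ₗᵢ[ℝ] EuclideanSpace ℝ (Fin n)) (s : EuclideanSpace ℝ (Fin n)) :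
    gaussKernel σ (e s) = gaussKernel σ s := by
  simp only [gaussKernel, e.norm_map]

lemma integral_comp_apply_mul_gaussKernel {σ : ℝ} (hσ : 0 < σ) {n : ℕ} (i : Fin n) (F : ℝ → ℝ) :
    ∫ y : EuclideanSpace ℝ (Fin n), F (y i) * gaussKernel σ y = ∫ a, F a * gaussDensity σ a := by
  classical
  rw [← (PiLp.volume_preserving_toLp (Fin n)).integral_comp
    (MeasurableEquiv.toLp 2 _).measurableEmbedding]
  have hprod : ∀ z : Fin n → ℝ, F (z i) * gaussKernel σ (WithLp.toLp 2 z)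
      = ∏ j, (if j = i then fun a => F a * gaussDensity σ a else gaussDensity σ) (z j) := by
    intro z
    rw [gaussKernel_toLp, ← Finset.mul_prod_erase _ _ (Finset.mem_univ i),
      ← Finset.mul_prod_erase _ _ (Finset.mem_univ i), if_pos rfl, mul_assoc]
    congr 2
    exact Finset.prod_congr rfl fun j hj => by rw [if_neg (Finset.ne_of_mem_erase hj)]
  simp only [hprod]
  rw [integral_fintype_prod_volume_eq_prod, ← Finset.mul_prod_erase _ _ (Finset.mem_univ i),
    if_pos rfl, Finset.prod_eq_one, mul_one]
  intro j hj
  rw [if_neg (Finset.ne_of_mem_erase hj), integral_gaussDensity hσ]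

lemma integral_comp_inner_mul_gaussKernel {σ : ℝ} (hσ : 0 < σ) {n : ℕ}
    {u : EuclideanSpace ℝ (Fin n)} (hu : ‖u‖ = 1) (F : ℝ → ℝ) :
    ∫ s, F ⟪s, u⟫ * gaussKernel σ s = ∫ a, F a * gaussDensity σ a := by
  obtain ⟨i⟩ : Nonempty (Fin n) := by
    by_contra h
    rw [not_nonempty_iff] at h
    simp [Subsingleton.elim u 0] at hu
  let e := Submodule.reflection (ℝ ∙ (u - EuclideanSpace.single i 1))ᗮ
  have heu : e u = EuclideanSpace.single i 1 :=
    Submodule.reflection_sub (by rw [hu, PiLp.norm_single, norm_one])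
  have hinner : ∀ s, ⟪s, u⟫ = e s i := fun s => by
    rw [← e.inner_map_map, heu, EuclideanSpace.inner_single_right, one_mul, conj_trivial]
  calc ∫ s, F ⟪s, u⟫ * gaussKernel σ s = ∫ s, F (e s i) * gaussKernel σ (e s) := by
        simp only [hinner, gaussKernel_linearIsometryEquiv_apply]
    _ = ∫ y, F (y i) * gaussKernel σ y :=
        e.measurePreserving.integral_comp' (f := e.toMeasurableEquiv)
          fun y => F (y i) * gaussKernel σ y
    _ = ∫ a, F a * gaussDensity σ a := integral_comp_apply_mul_gaussKernel hσ i F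

theorem gaussian_smoothing_sign_linear_general (σ : ℝ) (hσ : 0 < σ) (n : ℕ)
    (x w : EuclideanSpace ℝ (Fin n)) (hx : x ≠ 0) :
    (∫ t : EuclideanSpace ℝ (Fin n), Real.sign ⟪t, x⟫ * gaussKernel σ (w - t)) =
      erf (⟪w, x⟫ / (Real.sqrt 2 * σ * ‖x‖)) := by
  have hx_pos : 0 < ‖x‖ := norm_pos_iff.2 hx
  set u := (‖x‖⁻¹ : ℝ) • x
  have hu : ‖u‖ = 1 := by rw [norm_smul, norm_inv, norm_norm, inv_mul_cancel₀ hx_pos.ne']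
  have hsign : ∀ s, Real.sign ⟪w - s, x⟫ = Real.sign (⟪w, u⟫ - ⟪s, u⟫) := fun s => by
    rw [← inner_sub_left, real_inner_smul_right, Real.sign_mul_of_pos (inv_pos.2 hx_pos)]
  calc (∫ t, Real.sign ⟪t, x⟫ * gaussKernel σ (w - t))
      = ∫ s, Real.sign (⟪w, u⟫ - ⟪s, u⟫) * gaussKernel σ s := by
        rw [← integral_sub_left_eq_self _ _ w]
        simp only [sub_sub_cancel, hsign]
    _ = ∫ a, Real.sign (⟪w, u⟫ - a) * gaussDensity σ a :=
        integral_comp_inner_mul_gaussKernel hσ hu fun a => Real.sign (⟪w, u⟫ - a)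
    _ = erf (⟪w, u⟫ / (Real.sqrt 2 * σ)) := by
        rw [integral_sign_sub_mul_of_even (integrable_gaussDensity hσ.ne') (gaussDensity_neg σ),
          intervalIntegral_gaussDensity_eq_erf hσ.ne']
    _ = erf (⟪w, x⟫ / (Real.sqrt 2 * σ * ‖x‖)) := by
        rw [real_inner_smul_right, inv_mul_eq_div, div_div, mul_comm ‖x‖]

theorem gaussian_smoothing_sign_linear (σ : ℝ) (hσ : 0 < σ) (n : ℕ) (hn : 1 ≤ n)
    (x w : EuclideanSpace ℝ (Fin n)) (hx : x ≠ 0) :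
    (∫ t : EuclideanSpace ℝ (Fin n), Real.sign ⟪t, x⟫ * gaussKernel σ (w - t)) =
      erf (⟪w, x⟫ / (Real.sqrt 2 * σ * ‖x‖)) :=
  gaussian_smoothing_sign_linear_general σ hσ n x w hx
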